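/- Let μ be a probability measure on ℝ with mean 0 and finite moments of all orders, let p ≥ 2 be even, and let X₁,...,X_n be independent with Xᵢ = uᵢwᵢ where wᵢ ~ μ iid and u ∈ ℝ^n is a unit vector. Then for every t > 0, Σᵢ log E[|1 + Xᵢ/t|^p] ≤ E[(1+|w₁|)^p] · ((1 + 1/t)^p − 1 − p/t). -/

import Mathlib

/-!
Write `c = uᵢ / t`. As `p` is even, `|1 + c x|ᵖ = (1 + c x)ᵖ`, and after the binomial expansion
the constant term integrates to `1` and the linear term to `0` since `μ` is centred. For `k ≥ 2`,
`|uᵢ| ≤ 1` gives `|c x|ᵏ ≤ uᵢ² t⁻ᵏ (1 + |x|)ᵖ`, so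
`E|1 + c X|ᵖ - 1 ≤ uᵢ² E(1 + |X|)ᵖ ((1 + 1/t)ᵖ - 1 - p/t)`.
Conclude with `log y ≤ y - 1` and `∑ uᵢ² = 1`.
-/

open MeasureTheory Finset

theorem one_add_pow_sub_one_sub_mul_eq_sum (p : ℕ) (a : ℝ) :
    (1 + a) ^ p - 1 - p * a = ∑ k ∈ Ico 2 (p + 1), (p.choose k : ℝ) * a ^ k := by
  rcases p with _ | p
  · simp
  rw [add_comm, add_pow, ← sum_range_add_sum_Ico _ (by omega : 2 ≤ p + 1 + 1)]
  simp only [one_pow, mul_one, sum_range_succ, range_one, sum_singleton, pow_zero,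
    Nat.choose_zero_right, Nat.cast_one, pow_one, Nat.choose_one_right, Nat.cast_add, mul_comm]
  ring

theorem one_add_pow_sub_one_sub_mul_le_abs (p : ℕ) (a : ℝ) :
    (1 + a) ^ p - 1 - p * a ≤ (1 + |a|) ^ p - 1 - p * |a| := by
  simp only [one_add_pow_sub_one_sub_mul_eq_sum]
  refine sum_le_sum fun k _ => ?_
  rw [← abs_pow]
  exact mul_le_mul_of_nonneg_left (le_abs_self _) (Nat.cast_nonneg _)

theorem one_add_pow_sub_one_sub_mul_mul_le (p : ℕ) {s y r : ℝ} (hs₀ : 0 ≤ s) (hs₁ : s ≤ 1)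
    (hy : 0 ≤ y) (hr : 0 ≤ r) :
    (1 + s * y * r) ^ p - 1 - p * (s * y * r) ≤
      s ^ 2 * (1 + y) ^ p * ((1 + r) ^ p - 1 - p * r) := by
  simp only [one_add_pow_sub_one_sub_mul_eq_sum, mul_sum]
  refine sum_le_sum fun k hk => ?_
  obtain ⟨hk₂, hkp⟩ := mem_Ico.mp hk
  have hs : s ^ k ≤ s ^ 2 := pow_le_pow_of_le_one hs₀ hs₁ hk₂
  have hy : y ^ k ≤ (1 + y) ^ p :=
    (pow_le_pow_left₀ hy (by linarith) k).trans
      (pow_le_pow_right₀ (by linarith) (by omega))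
  calc (p.choose k : ℝ) * (s * y * r) ^ k = s ^ k * y ^ k * (p.choose k * r ^ k) := by ring
    _ ≤ s ^ 2 * (1 + y) ^ p * (p.choose k * r ^ k) := by gcongr

theorem integrable_one_add_mul_pow {α : Type*} [MeasurableSpace α] {μ : Measure α} {f : α → ℝ}
    (hf : ∀ k : ℕ, Integrable (fun x => f x ^ k) μ) (c : ℝ) (p : ℕ) :
    Integrable (fun x => (1 + c * f x) ^ p) μ := by
  simp_rw [add_comm (1 : ℝ), add_pow, one_pow, mul_one, mul_pow]
  exact integrable_finsetSum _ fun k _ => ((hf k).const_mul (c ^ k)).mul_const _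

theorem integrable_pow_of_integrable_abs_pow {μ : Measure ℝ}
    (hmom : ∀ k : ℕ, Integrable (fun x => |x| ^ k) μ) (k : ℕ) :
    Integrable (fun x : ℝ => x ^ k) μ :=
  (hmom k).mono (measurable_id.pow_const k).aestronglyMeasurable
    (.of_forall fun x => by simp)

theorem one_add_pow_sub_one_sub_mul_nonneg {p : ℕ} {r : ℝ} (hr : -2 ≤ r) :
    0 ≤ (1 + r) ^ p - 1 - p * r := by
  linarith [one_add_mul_le_pow hr p]

theorem integral_abs_one_add_mul_div_pow_sub_one_le (μ : Measure ℝ) [IsProbabilityMeasure μ]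
    (hmean : ∫ x, x ∂μ = 0) (hmom : ∀ k : ℕ, Integrable (fun x => |x| ^ k) μ)
    {p : ℕ} (hp : Even p) {v : ℝ} (hv : |v| ≤ 1) {t : ℝ} (ht : 0 < t) :
    ∫ x, |1 + v * x / t| ^ p ∂μ - 1 ≤
      v ^ 2 * ((∫ x, (1 + |x|) ^ p ∂μ) * ((1 + 1 / t) ^ p - 1 - p / t)) := by
  set c := v / t
  have hpow : ∀ x, |1 + v * x / t| ^ p = (1 + c * x) ^ p := fun x => by
    rw [hp.pow_abs, mul_div_right_comm]
  have hint : Integrable (fun x => (1 + c * x) ^ p) μ :=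
    integrable_one_add_mul_pow (f := fun x => x) (integrable_pow_of_integrable_abs_pow hmom) c p
  have hintM : Integrable (fun x => (1 + |x|) ^ p) μ := by
    simpa using integrable_one_add_mul_pow (f := abs) hmom 1 p
  have hlin : Integrable (fun x : ℝ => p * (c * x)) μ :=
    ((integrable_pow_of_integrable_abs_pow hmom 1).const_mul (p * c)).congr
      (.of_forall fun x => by ring)
  have hint_sub_one : Integrable (fun x => (1 + c * x) ^ p - 1) μ := hint.sub (integrable_const 1)
  have hsub : ∫ x, |1 + v * x / t| ^ p ∂μ - 1 = ∫ x, (1 + c * x) ^ p - 1 - p * (c * x) ∂μ := by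
    rw [integral_sub hint_sub_one hlin, integral_sub hint (integrable_const 1),
      integral_const_mul, integral_const_mul, hmean]
    simp [hpow]
  have hpointwise : ∀ x, (1 + c * x) ^ p - 1 - p * (c * x) ≤
      v ^ 2 * (1 + |x|) ^ p * ((1 + 1 / t) ^ p - 1 - p * (1 / t)) := fun x =>
    calc (1 + c * x) ^ p - 1 - p * (c * x)
        ≤ (1 + |c * x|) ^ p - 1 - p * |c * x| := one_add_pow_sub_one_sub_mul_le_abs p _
      _ = (1 + |v| * |x| * (1 / t)) ^ p - 1 - p * (|v| * |x| * (1 / t)) := by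
          rw [abs_mul, abs_div, abs_of_pos ht]; ring
      _ ≤ v ^ 2 * (1 + |x|) ^ p * ((1 + 1 / t) ^ p - 1 - p * (1 / t)) := by
          simpa only [sq_abs] using one_add_pow_sub_one_sub_mul_mul_le p (abs_nonneg v) hv
            (abs_nonneg x) (by positivity)
  rw [hsub, ← mul_one_div (p : ℝ), ← mul_assoc, ← integral_const_mul, ← integral_mul_const]
  exact integral_mono (hint_sub_one.sub hlin) ((hintM.const_mul _).mul_const _) hpointwise

theorem log_integral_abs_one_add_mul_div_pow_le (μ : Measure ℝ) [IsProbabilityMeasure μ]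
    (hmean : ∫ x, x ∂μ = 0) (hmom : ∀ k : ℕ, Integrable (fun x => |x| ^ k) μ)
    {p : ℕ} (hp : Even p) {v : ℝ} (hv : |v| ≤ 1) {t : ℝ} (ht : 0 < t) :
    Real.log (∫ x, |1 + v * x / t| ^ p ∂μ) ≤
      v ^ 2 * ((∫ x, (1 + |x|) ^ p ∂μ) * ((1 + 1 / t) ^ p - 1 - p / t)) := by
  rcases (integral_nonneg fun x => by positivity : 0 ≤ ∫ x, |1 + v * x / t| ^ p ∂μ).eq_or_lt
    with hzero | hpos
  · have hM : 0 ≤ ∫ x, (1 + |x|) ^ p ∂μ := integral_nonneg fun x => by positivity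
    have hK : 0 ≤ (1 + 1 / t) ^ p - 1 - p / t := by
      simpa only [mul_one_div] using
        one_add_pow_sub_one_sub_mul_nonneg (p := p) (r := 1 / t) (by linarith [one_div_pos.2 ht])
    rw [← hzero, Real.log_zero]
    positivity
  · exact (Real.log_le_sub_one_of_pos hpos).trans
      (integral_abs_one_add_mul_div_pow_sub_one_le μ hmean hmom hp hv ht)

theorem stmt_14_general (μ : Measure ℝ) [IsProbabilityMeasure μ]
    (hmean : ∫ x, x ∂μ = 0)
    (hmom : ∀ k : ℕ, Integrable (fun x => |x| ^ k) μ)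
    (p : ℕ) (hpeven : Even p)
    (n : ℕ) (u : Fin n → ℝ) (hu : ∑ i, u i ^ 2 = 1)
    (t : ℝ) (ht : 0 < t) :
    ∑ i, Real.log (∫ x, |1 + u i * x / t| ^ p ∂μ) ≤
      (∫ x, (1 + |x|) ^ p ∂μ) * ((1 + 1 / t) ^ p - 1 - p / t) := by
  have hu_le : ∀ i, |u i| ≤ 1 := fun i => by
    rw [← sq_le_one_iff_abs_le_one, ← hu]
    exact single_le_sum (fun j _ => sq_nonneg (u j)) (mem_univ i)
  calc ∑ i, Real.log (∫ x, |1 + u i * x / t| ^ p ∂μ)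
      ≤ ∑ i, u i ^ 2 * ((∫ x, (1 + |x|) ^ p ∂μ) * ((1 + 1 / t) ^ p - 1 - p / t)) :=
        sum_le_sum fun i _ =>
          log_integral_abs_one_add_mul_div_pow_le μ hmean hmom hpeven (hu_le i) ht
    _ = (∫ x, (1 + |x|) ^ p ∂μ) * ((1 + 1 / t) ^ p - 1 - p / t) := by
        rw [← sum_mul, hu, one_mul]

theorem stmt_14 (μ : Measure ℝ) [IsProbabilityMeasure μ]
    (hmean : ∫ x, x ∂μ = 0)
    (hmom : ∀ k : ℕ, Integrable (fun x => |x| ^ k) μ)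
    (p : ℕ) (hp : 2 ≤ p) (hpeven : Even p)
    (n : ℕ) (u : Fin n → ℝ) (hu : ∑ i, u i ^ 2 = 1)
    (t : ℝ) (ht : 0 < t) :
    ∑ i, Real.log (∫ x, |1 + u i * x / t| ^ p ∂μ) ≤
      (∫ x, (1 + |x|) ^ p ∂μ) * ((1 + 1 / t) ^ p - 1 - p / t) :=
  stmt_14_general μ hmean hmom p hpeven n u hu t ht
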